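/- Let p ≥ n > 1 be real and let b_{pn}(z,u) := 2z(4−z)(1−u)^{2n} u^{2n} (1 − zu + zu^2)^p / ( [(1−u)^{2n} + u^{2n}] [(1−u)^p u^n + (1−u)^n u^p]^2 ) for (z,u) ∈ [0,4] × (0,1), extended by b_{pn}(z,0) := b_{pn}(z,1) := 2z(4−z)/(1 + 3δ_{pn}). Then b_{pn} is continuous on [0,4] × [0,1]; in particular b_{pn}(z,u) → 2z(4−z)/(1+3δ_{pn}) as u → 0⁺ and as u → 1⁻. -/
import Mathlib

open scoped BigOperators
noncomputable section

/-- Kronecker delta `δ_{pn}`. -/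
def kdelta (p n : ℝ) : ℝ := if p = n then 1 else 0

/-- The function `b_{pn}` on `[0,4] × [0,1]`, extended by its boundary values at `u = 0, 1`. -/
def bpn (p n : ℝ) (z u : ℝ) : ℝ :=
  if u = 0 ∨ u = 1 then 2 * z * (4 - z) / (1 + 3 * kdelta p n)
  else 2 * z * (4 - z) * (1 - u) ^ (2 * n) * u ^ (2 * n) * (1 - z * u + z * u ^ 2) ^ p /
    (((1 - u) ^ (2 * n) + u ^ (2 * n)) *
      ((1 - u) ^ p * u ^ n + (1 - u) ^ n * u ^ p) ^ 2)

lemma cont_rpow_const {c : ℝ} (hc : 0 ≤ c) : Continuous (fun x : ℝ => x ^ c) :=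
  continuous_iff_continuousAt.2 fun x => Real.continuousAt_rpow_const x c (Or.inr hc)

lemma pos_aux (c : ℝ) {u : ℝ} (h0 : 0 ≤ u) (h1 : u ≤ 1) : 0 < (1 - u) ^ c + u ^ c := by
  rcases le_or_gt u (1/2) with h | h
  · have ha : (0:ℝ) < 1 - u := by linarith
    have h2 := Real.rpow_pos_of_pos ha c
    have h3 := Real.rpow_nonneg h0 c
    linarith
  · have hu : (0:ℝ) < u := by linarith
    have h2 := Real.rpow_pos_of_pos hu c
    have h3 := Real.rpow_nonneg (by linarith : (0:ℝ) ≤ 1 - u) c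
    linarith

/-- The regularized form of `bpn`. -/
def Gfun (p n : ℝ) (zu : ℝ × ℝ) : ℝ :=
  2 * zu.1 * (4 - zu.1) * (1 - zu.1 * zu.2 + zu.1 * zu.2 ^ 2) ^ p /
    (((1 - zu.2) ^ (2 * n) + zu.2 ^ (2 * n)) *
      ((1 - zu.2) ^ (p - n) + zu.2 ^ (p - n)) ^ 2)

/-- For real `p ≥ n > 1`, the function `b_{pn}` is continuous on `[0,4] × [0,1]`;
in particular, for each `z ∈ [0,4]`, `b_{pn}(z,u) → 2z(4-z)/(1+3δ_{pn})`
as `u → 0⁺` and as `u → 1⁻`. -/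
theorem bpn_continuousOn (p n : ℝ) (hpn : n ≤ p) (hn : 1 < n) :
    ContinuousOn (fun zu : ℝ × ℝ => bpn p n zu.1 zu.2)
      (Set.Icc (0 : ℝ) 4 ×ˢ Set.Icc (0 : ℝ) 1) ∧
    ∀ z ∈ Set.Icc (0 : ℝ) 4,
      Filter.Tendsto (fun u => bpn p n z u) (nhdsWithin 0 (Set.Ioi 0))
        (nhds (2 * z * (4 - z) / (1 + 3 * kdelta p n))) ∧
      Filter.Tendsto (fun u => bpn p n z u) (nhdsWithin 1 (Set.Iio 1))
        (nhds (2 * z * (4 - z) / (1 + 3 * kdelta p n))) := by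
  have hp1 : (1:ℝ) < p := lt_of_lt_of_le hn hpn
  have hp0 : (0:ℝ) ≤ p := by linarith
  have hn0 : (0:ℝ) ≤ n := by linarith
  have h2n : (0:ℝ) ≤ 2 * n := by linarith
  have hpn0 : (0:ℝ) ≤ p - n := by linarith
  set S : Set (ℝ × ℝ) := Set.Icc (0 : ℝ) 4 ×ˢ Set.Icc (0 : ℝ) 1 with hS
  -- denominator of G is positive on S
  have hden : ∀ u : ℝ, 0 ≤ u → u ≤ 1 →
      0 < ((1 - u) ^ (2 * n) + u ^ (2 * n)) *
        ((1 - u) ^ (p - n) + u ^ (p - n)) ^ 2 := by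
    intro u h0 h1
    have h2 := pos_aux (2 * n) h0 h1
    have h3 := pos_aux (p - n) h0 h1
    positivity
  -- continuity of G on S
  have hcont : ContinuousOn (Gfun p n) S := by
    apply ContinuousOn.div
    · apply Continuous.continuousOn
      apply Continuous.mul
      · fun_prop
      · exact (cont_rpow_const hp0).comp (by fun_prop)
    · apply Continuous.continuousOn
      apply Continuous.mul
      · apply Continuous.add
        · exact (cont_rpow_const h2n).comp (by fun_prop)
        · exact (cont_rpow_const h2n).comp (by fun_prop)
      · apply Continuous.pow
        apply Continuous.add
        · exact (cont_rpow_const hpn0).comp (by fun_prop)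
        · exact (cont_rpow_const hpn0).comp (by fun_prop)
    · rintro ⟨z, u⟩ ⟨hz, hu⟩
      exact (hden u hu.1 hu.2).ne'
  -- values at the boundary
  have hval0 : ∀ z : ℝ, Gfun p n (z, 0) = 2 * z * (4 - z) / (1 + 3 * kdelta p n) := by
    intro z
    have h2n' : (2 : ℝ) * n ≠ 0 := by positivity
    simp only [Gfun, kdelta]
    rcases eq_or_lt_of_le hpn with h | h
    · rw [if_pos h.symm]
      norm_num [Real.zero_rpow h2n', Real.one_rpow, ← h, Real.rpow_zero]
    · rw [if_neg (by linarith : p ≠ n)]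
      norm_num [Real.zero_rpow h2n', Real.one_rpow,
        Real.zero_rpow (by linarith : p - n ≠ 0)]
  have hval1 : ∀ z : ℝ, Gfun p n (z, 1) = 2 * z * (4 - z) / (1 + 3 * kdelta p n) := by
    intro z
    have h2n' : (2 : ℝ) * n ≠ 0 := by positivity
    simp only [Gfun, kdelta]
    rcases eq_or_lt_of_le hpn with h | h
    · rw [if_pos h.symm]
      norm_num [Real.zero_rpow h2n', Real.one_rpow, ← h, Real.rpow_zero]
    · rw [if_neg (by linarith : p ≠ n)]
      norm_num [Real.zero_rpow h2n', Real.one_rpow,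
        Real.zero_rpow (by linarith : p - n ≠ 0)]
  -- bpn agrees with G on S
  have hEq : Set.EqOn (fun zu : ℝ × ℝ => bpn p n zu.1 zu.2) (Gfun p n) S := by
    rintro ⟨z, u⟩ ⟨hz, hu⟩
    by_cases h01 : u = 0 ∨ u = 1
    · rcases h01 with h | h
      · simp only [bpn, h, true_or, if_pos, eq_self_iff_true, or_true]
        exact (hval0 z).symm
      · simp only [bpn, h, or_true, if_pos]
        exact (hval1 z).symm
    · push_neg at h01
      have hu0 : 0 < u := lt_of_le_of_ne hu.1 (Ne.symm h01.1)
      have hu1 : 0 < 1 - u := by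
        rcases lt_or_eq_of_le hu.2 with h | h
        · linarith
        · exact absurd h h01.2
      simp only [bpn, if_neg (not_or.2 h01), Gfun]
      have e1 : (1 - u) ^ p = (1 - u) ^ n * (1 - u) ^ (p - n) := by
        rw [← Real.rpow_add hu1]; congr 1; ring
      have e2 : u ^ p = u ^ n * u ^ (p - n) := by
        rw [← Real.rpow_add hu0]; congr 1; ring
      have e3 : (1 - u) ^ (2 * n) = (1 - u) ^ n * (1 - u) ^ n := by
        rw [← Real.rpow_add hu1]; congr 1; ring
      have e4 : u ^ (2 * n) = u ^ n * u ^ n := by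
        rw [← Real.rpow_add hu0]; congr 1; ring
      rw [e1, e2, e3, e4]
      have hA : 0 < (1 - u) ^ n := Real.rpow_pos_of_pos hu1 n
      have hB : 0 < u ^ n := Real.rpow_pos_of_pos hu0 n
      have hX : 0 ≤ (1 - u) ^ (p - n) := Real.rpow_nonneg hu1.le _
      have hY : 0 ≤ u ^ (p - n) := Real.rpow_nonneg hu0.le _
      have hT : 0 < (1 - u) ^ (p - n) + u ^ (p - n) := pos_aux _ hu0.le (by linarith)
      have hD : 0 < (1 - u) ^ n * (1 - u) ^ n + u ^ n * u ^ n := by positivity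
      field_simp
  refine ⟨hcont.congr hEq, ?_⟩
  intro z hz
  have hz0 : ((z, (0:ℝ)) : ℝ × ℝ) ∈ S := ⟨hz, by norm_num⟩
  have hz1 : ((z, (1:ℝ)) : ℝ × ℝ) ∈ S := ⟨hz, by norm_num⟩
  constructor
  · have hmem : ∀ᶠ u in nhdsWithin (0:ℝ) (Set.Ioi 0), u ∈ Set.Ioo (0:ℝ) 1 := by
      filter_upwards [self_mem_nhdsWithin,
        eventually_nhdsWithin_of_eventually_nhds (eventually_lt_nhds one_pos)] with u h1 h2
      exact ⟨h1, h2⟩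
    have hmap : Filter.Tendsto (fun u : ℝ => ((z, u) : ℝ × ℝ))
        (nhdsWithin (0:ℝ) (Set.Ioi 0)) (nhdsWithin (z, 0) S) := by
      apply tendsto_nhdsWithin_of_tendsto_nhds_of_eventually_within
      · exact ((Continuous.prodMk_right z).tendsto 0).mono_left nhdsWithin_le_nhds
      · filter_upwards [hmem] with u h
        exact ⟨hz, ⟨h.1.le, h.2.le⟩⟩
    have hG := (hcont (z, 0) hz0).tendsto.comp hmap
    rw [hval0 z] at hG
    apply hG.congr'
    filter_upwards [hmem] with u h
    exact (hEq ⟨hz, ⟨h.1.le, h.2.le⟩⟩).symm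
  · have hmem : ∀ᶠ u in nhdsWithin (1:ℝ) (Set.Iio 1), u ∈ Set.Ioo (0:ℝ) 1 := by
      filter_upwards [self_mem_nhdsWithin,
        eventually_nhdsWithin_of_eventually_nhds (eventually_gt_nhds one_pos)] with u h1 h2
      exact ⟨h2, h1⟩
    have hmap : Filter.Tendsto (fun u : ℝ => ((z, u) : ℝ × ℝ))
        (nhdsWithin (1:ℝ) (Set.Iio 1)) (nhdsWithin (z, 1) S) := by
      apply tendsto_nhdsWithin_of_tendsto_nhds_of_eventually_within
      · exact ((Continuous.prodMk_right z).tendsto 1).mono_left nhdsWithin_le_nhds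
      · filter_upwards [hmem] with u h
        exact ⟨hz, ⟨h.1.le, h.2.le⟩⟩
    have hG := (hcont (z, 1) hz1).tendsto.comp hmap
    rw [hval1 z] at hG
    apply hG.congr'
    filter_upwards [hmem] with u h
    exact (hEq ⟨hz, ⟨h.1.le, h.2.le⟩⟩).symm
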